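/- arXiv:2010.03105 — 6 statements merged into one kernel-verified Lean document; each statement's English description precedes it below -/
import Mathlib

section
/- For every nice tree decomposition (𝒯, {B_x : x ∈ V_𝒯}) of a finite simple graph G = (V,E) and every subset W ⊆ V, there exists a node x of 𝒯 that is a strong centroid with respect to W, i.e., no connected component of G − B_x contains more than (1/2)·|W ∖ B_x| vertices of W. -/
/-- A tree decomposition of `G`: a tree `T` with a bag `B x` for each node `x` such that
every vertex is in some bag, every edge is covered by some bag, and for any node `z` on the
path between `x` and `y` in the tree, `B x ∩ B y ⊆ B z`. -/
def IsTreeDecomp {V ι : Type} [DecidableEq V] (G : SimpleGraph V) (T : SimpleGraph ι)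
    (B : ι → Finset V) : Prop :=
  T.IsTree ∧
  (∀ v : V, ∃ x : ι, v ∈ B x) ∧
  (∀ u v : V, G.Adj u v → ∃ x : ι, u ∈ B x ∧ v ∈ B x) ∧
  (∀ (x y z : ι) (p : T.Walk x y), p.IsPath → z ∈ p.support → B x ∩ B y ⊆ B z)

/-- The children of `x` in the tree `T` rooted at `r`: neighbors of `x` that are one step
further from the root. -/
def children {ι : Type} (T : SimpleGraph ι) (r x : ι) : Set ι :=
  {c | T.Adj x c ∧ T.dist r c = T.dist r x + 1}

/-- A nice tree decomposition: a tree decomposition rooted at `r`, in which every node has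
at most two children, and every node is a leaf, a forget node, an introduce node, or a
join node. -/
def IsNiceTreeDecomp {V ι : Type} [DecidableEq V] (G : SimpleGraph V) (T : SimpleGraph ι)
    (B : ι → Finset V) (r : ι) : Prop :=
  IsTreeDecomp G T B ∧
  (∀ x : ι, (children T r x).ncard ≤ 2) ∧
  (∀ x : ι,
    (children T r x = ∅) ∨
    (∃ c, children T r x = {c} ∧ ∃ v ∈ B c, B x = B c \ {v}) ∨
    (∃ c, children T r x = {c} ∧ ∃ v ∉ B c, B x = insert v (B c)) ∨
    (∃ c₁ c₂, c₁ ≠ c₂ ∧ children T r x = {c₁, c₂} ∧ B x = B c₁ ∧ B x = B c₂))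

/-- The set of vertices of `G` belonging to the connected component `C` of the subgraph of
`G` induced on `s`. -/
def compSet {V : Type} (G : SimpleGraph V) (s : Set V)
    (C : (G.induce s).ConnectedComponent) : Set V :=
  {v | ∃ h : v ∈ s, (G.induce s).connectedComponentMk ⟨v, h⟩ = C}

namespace StrongCentroidAux

variable {ι : Type} {T : SimpleGraph ι}

/-- The unique path between two vertices of a tree. -/
noncomputable def thePath (hT : T.IsTree) (a b : ι) : T.Walk a b :=
  (hT.existsUnique_path a b).choose

lemma thePath_isPath (hT : T.IsTree) (a b : ι) : (thePath hT a b).IsPath :=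
  (hT.existsUnique_path a b).choose_spec.1

lemma path_unique (hT : T.IsTree) {a b : ι} {p : T.Walk a b} (hp : p.IsPath) :
    p = thePath hT a b :=
  (hT.existsUnique_path a b).choose_spec.2 p hp

lemma length_thePath (hT : T.IsTree) (a b : ι) :
    (thePath hT a b).length = T.dist a b := by
  obtain ⟨p, hp⟩ := hT.isConnected.exists_walk_length_eq_dist a b
  have hpath : p.IsPath := p.isPath_of_length_eq_dist hp
  rw [← path_unique hT hpath]; exact hp

/-- `x` lies between `a` and `b` (on the unique tree path). -/
def Btw (T : SimpleGraph ι) (a x b : ι) : Prop :=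
  T.dist a x + T.dist x b = T.dist a b

/-- `a` and `b` are on the same side of `x`. -/
def Side (T : SimpleGraph ι) (x a b : ι) : Prop := ¬ Btw T a x b

lemma mem_support_of_btw (hT : T.IsTree) {a x b : ι} (h : Btw T a x b) :
    x ∈ (thePath hT a b).support := by
  obtain ⟨p1, hp1⟩ := hT.isConnected.exists_walk_length_eq_dist a x
  obtain ⟨p2, hp2⟩ := hT.isConnected.exists_walk_length_eq_dist x b
  have hlen : (p1.append p2).length = T.dist a b := by
    rw [SimpleGraph.Walk.length_append, hp1, hp2]; exact h
  have hpath : (p1.append p2).IsPath := (p1.append p2).isPath_of_length_eq_dist hlen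
  rw [← path_unique hT hpath]
  rw [SimpleGraph.Walk.mem_support_append_iff]
  exact Or.inl p1.end_mem_support

lemma btw_of_mem_support (hT : T.IsTree) {a x b : ι}
    (h : x ∈ (thePath hT a b).support) : Btw T a x b := by
  classical
  refine le_antisymm ?_ ?_
  · have hsplit := congrArg SimpleGraph.Walk.length ((thePath hT a b).take_spec h)
    rw [SimpleGraph.Walk.length_append, length_thePath] at hsplit
    calc T.dist a x + T.dist x b
        ≤ ((thePath hT a b).takeUntil x h).length +
          ((thePath hT a b).dropUntil x h).length :=
          Nat.add_le_add (SimpleGraph.dist_le _) (SimpleGraph.dist_le _)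
      _ = T.dist a b := hsplit
  · exact hT.isConnected.dist_triangle

lemma side_of_avoid (hT : T.IsTree) {a x b : ι} (w : T.Walk a b)
    (hx : x ∉ w.support) : Side T x a b := by
  classical
  intro hbtw
  have hmem := mem_support_of_btw hT hbtw
  have hb := path_unique hT w.bypass_isPath
  rw [← hb] at hmem
  exact hx (w.support_bypass_subset hmem)

lemma avoid_thePath_of_side (hT : T.IsTree) {a x b : ι} (h : Side T x a b) :
    x ∉ (thePath hT a b).support := fun m => h (btw_of_mem_support hT m)

lemma side_symm (hT : T.IsTree) {a x b : ι} (h : Side T x a b) : Side T x b a := by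
  classical
  have := avoid_thePath_of_side hT h
  refine side_of_avoid hT (thePath hT a b).reverse ?_
  rw [SimpleGraph.Walk.support_reverse]
  simpa using this

lemma side_trans (hT : T.IsTree) {a x b c : ι} (h1 : Side T x a b) (h2 : Side T x b c) :
    Side T x a c := by
  classical
  have ha := avoid_thePath_of_side hT h1
  have hb := avoid_thePath_of_side hT h2
  refine side_of_avoid hT ((thePath hT a b).append (thePath hT b c)) ?_
  rw [SimpleGraph.Walk.mem_support_append_iff]
  tauto

lemma dist_adj (hT : T.IsTree) {x c : ι} (h : T.Adj x c) : T.dist x c = 1 := by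
  have h1 : T.dist x c ≤ 1 := by
    simpa using SimpleGraph.dist_le (SimpleGraph.Walk.cons h SimpleGraph.Walk.nil)
  have h0 : T.dist x c ≠ 0 := fun e =>
    h.ne ((SimpleGraph.Reachable.dist_eq_zero_iff ⟨SimpleGraph.Walk.cons h SimpleGraph.Walk.nil⟩).1 e)
  omega

lemma walk_decomp {x z : ι} (p : T.Walk x z) (hp : p.IsPath) (hxz : x ≠ z) :
    ∃ (s : ι) (h : T.Adj x s) (q : T.Walk s z), q.IsPath ∧ x ∉ q.support ∧
      p.length = q.length + 1 := by
  cases p with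
  | nil => exact absurd rfl hxz
  | cons h q =>
    rw [SimpleGraph.Walk.cons_isPath_iff] at hp
    exact ⟨_, h, q, hp.1, hp.2, by simp⟩

/-- From a strictly-below node, find the child on its side. -/
lemma exists_child_side (hT : T.IsTree) (r : ι) {x z : ι} (hxz : z ≠ x)
    (hbtw : Btw T r x z) : ∃ c, c ∈ children T r x ∧ Side T x z c := by
  obtain ⟨s, hadj, q, hq, hxq, hlen⟩ :=
    walk_decomp (thePath hT x z) (thePath_isPath hT x z) (Ne.symm hxz)
  rw [length_thePath] at hlen
  have hqq : q = thePath hT s z := path_unique hT hq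
  have hdsz : q.length = T.dist s z := by rw [hqq, length_thePath]
  have hxs : T.dist x z = T.dist s z + 1 := by omega
  have htri1 : T.dist r s ≤ T.dist r x + 1 := by
    have := hT.isConnected.dist_triangle (u := r) (v := x) (w := s)
    rw [dist_adj hT hadj] at this; exact this
  have htri2 : T.dist r z ≤ T.dist r s + T.dist s z := hT.isConnected.dist_triangle
  have hbtw' : T.dist r x + T.dist x z = T.dist r z := hbtw
  have hchild : T.dist r s = T.dist r x + 1 := by omega
  refine ⟨s, ⟨hadj, hchild⟩, ?_⟩
  exact side_symm hT (side_of_avoid hT q hxq)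

lemma dist_eq_of_side_child (hT : T.IsTree) {x z c : ι} (hadj : T.Adj x c)
    (hs : Side T x z c) : T.dist x z = T.dist c z + 1 := by
  have hxp : x ∉ (thePath hT c z).support := avoid_thePath_of_side hT (side_symm hT hs)
  have hpath : (SimpleGraph.Walk.cons hadj (thePath hT c z)).IsPath := by
    rw [SimpleGraph.Walk.cons_isPath_iff]
    exact ⟨thePath_isPath hT c z, hxp⟩
  have := congrArg SimpleGraph.Walk.length (path_unique hT hpath)
  simp only [SimpleGraph.Walk.length_cons, length_thePath] at this
  omega

lemma btw_root_of_side_child (hT : T.IsTree) {r x z c : ι}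
    (hc : c ∈ children T r x) (hs : Side T x z c) :
    Btw T r x z ∧ Btw T r c z := by
  obtain ⟨hadj, hdc⟩ := hc
  have h1 : T.dist x z = T.dist c z + 1 := dist_eq_of_side_child hT hadj hs
  have hbxc : Btw T r x c := by
    unfold Btw; rw [dist_adj hT hadj]; omega
  have hbxz : Btw T r x z := by
    by_contra hside
    exact side_trans hT (hside : Side T x r z) hs hbxc
  refine ⟨hbxz, ?_⟩
  unfold Btw at hbxz ⊢
  omega

lemma btw_up (hT : T.IsTree) {r x z c : ι} (hc : c ∈ children T r x)
    (hz : Btw T r c z) : Btw T z c x := by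
  obtain ⟨hadj, hdc⟩ := hc
  have htri1 : T.dist r z ≤ T.dist r x + T.dist x z := hT.isConnected.dist_triangle
  have htri2 : T.dist x z ≤ T.dist x c + T.dist c z := hT.isConnected.dist_triangle
  have hxc : T.dist x c = 1 := dist_adj hT hadj
  unfold Btw at hz ⊢
  have e1 : T.dist z c = T.dist c z := SimpleGraph.dist_comm
  have e2 : T.dist c x = T.dist x c := SimpleGraph.dist_comm
  have e3 : T.dist z x = T.dist x z := SimpleGraph.dist_comm
  omega


section Decomp

variable {V ι : Type} [Fintype V] [DecidableEq V]
  {G : SimpleGraph V} {T : SimpleGraph ι} {B : ι → Finset V}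

lemma compSet_subset {s : Set V} {C : (G.induce s).ConnectedComponent} :
    compSet G s C ⊆ s := by
  intro v hv
  obtain ⟨h, -⟩ := hv
  exact h

lemma compSet_disjoint {s : Set V} {C D : (G.induce s).ConnectedComponent}
    (h : C ≠ D) : Disjoint (compSet G s C) (compSet G s D) := by
  rw [Set.disjoint_left]
  rintro v ⟨h1, e1⟩ ⟨h2, e2⟩
  exact h (e1.symm.trans e2)

lemma count_one (W : Finset V) {y : ι} {S : Set V}
    (hS : S ⊆ {v : V | v ∉ B y}) :
    ((W : Set V) ∩ S).ncard ≤ (W \ B y).card := by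
  have hsub : (W : Set V) ∩ S ⊆ ↑(W \ B y) := by
    rintro v ⟨hvW, hvS⟩
    simp only [Finset.coe_sdiff, Set.mem_diff, Finset.mem_coe]
    exact ⟨hvW, hS hvS⟩
  calc ((W : Set V) ∩ S).ncard ≤ (↑(W \ B y) : Set V).ncard :=
        Set.ncard_le_ncard hsub (Finset.finite_toSet _)
    _ = (W \ B y).card := Set.ncard_coe_finset _

lemma count_two (W : Finset V) {y : ι} {S S' : Set V}
    (hS : S ⊆ {v : V | v ∉ B y}) (hS' : S' ⊆ {v : V | v ∉ B y})
    (hd : Disjoint S S') :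
    ((W : Set V) ∩ S).ncard + ((W : Set V) ∩ S').ncard ≤ (W \ B y).card := by
  have hd' : Disjoint ((W : Set V) ∩ S) ((W : Set V) ∩ S') :=
    (hd.mono Set.inter_subset_right Set.inter_subset_right)
  have hsub : ((W : Set V) ∩ S) ∪ ((W : Set V) ∩ S') ⊆ ↑(W \ B y) := by
    rintro v (⟨hvW, hvS⟩ | ⟨hvW, hvS⟩) <;>
      · simp only [Finset.coe_sdiff, Set.mem_diff, Finset.mem_coe]
        first
        | exact ⟨hvW, hS hvS⟩
        | exact ⟨hvW, hS' hvS⟩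
  calc ((W : Set V) ∩ S).ncard + ((W : Set V) ∩ S').ncard
      = (((W : Set V) ∩ S) ∪ ((W : Set V) ∩ S')).ncard :=
        (Set.ncard_union_eq hd' (Set.toFinite _) (Set.toFinite _)).symm
    _ ≤ (↑(W \ B y) : Set V).ncard := Set.ncard_le_ncard hsub (Finset.finite_toSet _)
    _ = (W \ B y).card := Set.ncard_coe_finset _

lemma mk_mono {s t : Set V} (hst : s ⊆ t) {u v : V} (hu : u ∈ s) (hv : v ∈ s)
    (h : (G.induce s).connectedComponentMk ⟨u, hu⟩ =
      (G.induce s).connectedComponentMk ⟨v, hv⟩) :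
    (G.induce t).connectedComponentMk ⟨u, hst hu⟩ =
      (G.induce t).connectedComponentMk ⟨v, hst hv⟩ := by
  rw [SimpleGraph.ConnectedComponent.eq] at h ⊢
  exact h.map (G.induceHomOfLE hst).toHom

lemma comp_transfer {s t : Set V} (h : s = t)
    (C : (G.induce s).ConnectedComponent) :
    ∃ D : (G.induce t).ConnectedComponent, compSet G t D = compSet G s C := by
  subst h
  exact ⟨C, rfl⟩

lemma support_in_comp {s : Set V} {a b : s} (p : (G.induce s).Walk a b) {w : s}
    (hw : w ∈ p.support) :
    (G.induce s).connectedComponentMk w = (G.induce s).connectedComponentMk b := by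
  classical
  exact SimpleGraph.ConnectedComponent.sound ⟨p.dropUntil w hw⟩

lemma mk_eq_of_walk_support {s t : Set V} {a b : s} (p : (G.induce s).Walk a b)
    (hsup : ∀ w ∈ p.support, (w : V) ∈ t) :
    ∀ (ha : (a : V) ∈ t) (hb : (b : V) ∈ t),
      (G.induce t).connectedComponentMk ⟨a, ha⟩ =
        (G.induce t).connectedComponentMk ⟨b, hb⟩ := by
  induction p with
  | nil => intro ha hb; rfl
  | @cons u y w h q ih =>
    intro ha hb
    have h2 : (y : V) ∈ t := hsup y (by simp)
    have step : (G.induce t).Adj ⟨u, ha⟩ ⟨y, h2⟩ := h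
    have htail := ih (fun w hw => hsup w (by simp [hw])) h2 hb
    exact (SimpleGraph.ConnectedComponent.connectedComponentMk_eq_of_adj step).trans htail

lemma side_of_bags (hT : T.IsTree)
    (hpath : ∀ (x y z : ι) (p : T.Walk x y), p.IsPath → z ∈ p.support → B x ∩ B y ⊆ B z)
    {x a b : ι} {v : V} (hvx : v ∉ B x) (hva : v ∈ B a) (hvb : v ∈ B b) :
    Side T x a b := by
  intro hbtw
  exact hvx (hpath a b x (thePath hT a b) (thePath_isPath hT a b)
    (mem_support_of_btw hT hbtw) (Finset.mem_inter.mpr ⟨hva, hvb⟩))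

lemma side_of_walk_bags (hT : T.IsTree)
    (hedge : ∀ u v : V, G.Adj u v → ∃ x : ι, u ∈ B x ∧ v ∈ B x)
    (hpath : ∀ (x y z : ι) (p : T.Walk x y), p.IsPath → z ∈ p.support → B x ∩ B y ⊆ B z)
    {x : ι} {s : Set V} (hs : ∀ v ∈ s, v ∉ B x) {u w : s}
    (p : (G.induce s).Walk u w) :
    ∀ a b : ι, (u : V) ∈ B a → (w : V) ∈ B b → Side T x a b := by
  induction p with
  | @nil u =>
    intro a b ha hb
    exact side_of_bags hT hpath (hs _ u.2) ha hb
  | @cons u y w h q ih =>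
    intro a b ha hb
    have hadj : G.Adj (u : V) (y : V) := h
    obtain ⟨e, h1, h2⟩ := hedge _ _ hadj
    exact side_trans hT (side_of_bags hT hpath (hs _ u.2) ha h1) (ih e b h2 hb)

/-- `x` is a strong centroid. -/
def IsCentroid (G : SimpleGraph V) (B : ι → Finset V) (W : Finset V) (x : ι) : Prop :=
  ∀ C : (G.induce {v : V | v ∉ B x}).ConnectedComponent,
    2 * ((W : Set V) ∩ compSet G {v : V | v ∉ B x} C).ncard ≤ (W \ B x).card

/-- There is a heavy component at `x` all of whose vertices have all their bags
strictly below `x`. -/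
def GoodComp (G : SimpleGraph V) (T : SimpleGraph ι) (B : ι → Finset V) (r : ι)
    (W : Finset V) (x : ι) : Prop :=
  ∃ C : (G.induce {v : V | v ∉ B x}).ConnectedComponent,
    (W \ B x).card < 2 * ((W : Set V) ∩ compSet G {v : V | v ∉ B x} C).ncard ∧
    ∀ v ∈ compSet G {v : V | v ∉ B x} C, ∀ z : ι, v ∈ B z → Btw T r x z ∧ z ≠ x

lemma sb_child (hT : T.IsTree) {r x c : ι} (hc : c ∈ children T r x)
    {v : V} (hvc : v ∉ B c)
    (hside : ∀ z : ι, v ∈ B z → Side T x z c) :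
    ∀ z : ι, v ∈ B z → Btw T r c z ∧ z ≠ c := by
  intro z hz
  refine ⟨(btw_root_of_side_child hT hc (hside z hz)).2, ?_⟩
  rintro rfl
  exact hvc hz

end Decomp


lemma descend {V ι : Type} [Fintype V] [DecidableEq V]
    {G : SimpleGraph V} {T : SimpleGraph ι} {B : ι → Finset V} {r : ι}
    (hT : T.IsTree)
    (hedge : ∀ u v : V, G.Adj u v → ∃ x : ι, u ∈ B x ∧ v ∈ B x)
    (hpath : ∀ (x y z : ι) (p : T.Walk x y), p.IsPath → z ∈ p.support → B x ∩ B y ⊆ B z)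
    (hkind : ∀ x : ι,
      (children T r x = ∅) ∨
      (∃ c, children T r x = {c} ∧ ∃ v ∈ B c, B x = B c \ {v}) ∨
      (∃ c, children T r x = {c} ∧ ∃ v ∉ B c, B x = insert v (B c)) ∨
      (∃ c₁ c₂, c₁ ≠ c₂ ∧ children T r x = {c₁, c₂} ∧ B x = B c₁ ∧ B x = B c₂))
    (W : Finset V) (nd : V → ι) (hnd : ∀ v : V, v ∈ B (nd v)) :
    ∀ (n : ℕ) (x : ι), W.sup (fun w => T.dist r (nd w)) < T.dist r x + n →
      GoodComp G T B r W x → ∃ y : ι, IsCentroid G B W y := by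
  classical
  intro n
  induction n with
  | zero =>
    intro x hlt hinv
    exfalso
    obtain ⟨C, hheavy, hsb⟩ := hinv
    -- the heavy component contains a vertex of W
    have hne : ((W : Set V) ∩ compSet G {v : V | v ∉ B x} C).ncard ≠ 0 := by
      intro h0; rw [h0] at hheavy; omega
    obtain ⟨w, hwW, hwC⟩ := Set.nonempty_of_ncard_ne_zero hne
    obtain ⟨hbtw, hnex⟩ := hsb w hwC (nd w) (hnd w)
    have hd0 : T.dist x (nd w) ≠ 0 := by
      intro h0
      exact hnex ((SimpleGraph.Reachable.dist_eq_zero_iff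
        (hT.isConnected.preconnected x (nd w))).1 h0).symm
    have hle : T.dist r (nd w) ≤ W.sup (fun w => T.dist r (nd w)) :=
      Finset.le_sup (f := fun w => T.dist r (nd w)) hwW
    have : Btw T r x (nd w) := hbtw
    unfold Btw at this
    omega
  | succ n ih =>
    intro x hlt hinv
    obtain ⟨C, hheavy, hsb⟩ := hinv
    rcases hkind x with hleaf | ⟨c, hone, v0, hv0, hBx⟩ | ⟨c, hone, hv0ex⟩ |
      ⟨c1, c2, hcne, htwo, hB1, hB2⟩
    · -- leaf: contradiction
      exfalso
      obtain ⟨⟨u0, hu0⟩, hu0mk⟩ := C.exists_rep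
      have hu0C : u0 ∈ compSet G {v : V | v ∉ B x} C := ⟨hu0, hu0mk⟩
      obtain ⟨hbtw, hnex⟩ := hsb u0 hu0C (nd u0) (hnd u0)
      obtain ⟨c, hc, -⟩ := exists_child_side hT r hnex hbtw
      rw [hleaf] at hc
      exact hc
    · -- forget node: B x = B c \ {v0}
      have hcchild : c ∈ children T r x := by rw [hone]; rfl
      have hsub : {v : V | v ∉ B c} ⊆ {v : V | v ∉ B x} := by
        intro v hv hvx
        exact hv (by rw [hBx] at hvx; exact (Finset.mem_sdiff.1 hvx).1)
      by_cases hcent : IsCentroid G B W c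
      · exact ⟨c, hcent⟩
      · simp only [IsCentroid, not_forall, not_le] at hcent
        obtain ⟨D, hD⟩ := hcent
        obtain ⟨⟨u0, hu0sc⟩, hu0mk⟩ := D.exists_rep
        set C' := (G.induce {v : V | v ∉ B x}).connectedComponentMk ⟨u0, hsub hu0sc⟩
          with hC'def
        have hDsub : compSet G {v : V | v ∉ B c} D ⊆ compSet G {v : V | v ∉ B x} C' := by
          rintro v ⟨hv, hmkv⟩
          exact ⟨hsub hv, mk_mono hsub hv hu0sc (hmkv.trans hu0mk.symm)⟩
        have hC'C : C' = C := by
          by_contra hne'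
          have h1 := count_two (B := B) W (compSet_subset (C := C'))
            (compSet_subset (C := C)) (compSet_disjoint hne')
          have h2 : ((W : Set V) ∩ compSet G {v : V | v ∉ B c} D).ncard ≤
              ((W : Set V) ∩ compSet G {v : V | v ∉ B x} C').ncard :=
            Set.ncard_le_ncard (Set.inter_subset_inter_right _ hDsub) (Set.toFinite _)
          have h3 : (W \ B x).card ≤ (W \ B c).card + 1 := by
            have hsub2 : W \ B x ⊆ (W \ B c) ∪ {v0} := by
              intro v hv
              rw [Finset.mem_sdiff, hBx, Finset.mem_sdiff] at hv
              rw [Finset.mem_union, Finset.mem_sdiff, Finset.mem_singleton]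
              by_cases hvc : v ∈ B c
              · right
                by_contra hvv0
                exact hv.2 ⟨hvc, by simpa using hvv0⟩
              · exact Or.inl ⟨hv.1, hvc⟩
            calc (W \ B x).card ≤ ((W \ B c) ∪ {v0}).card := Finset.card_le_card hsub2
              _ ≤ (W \ B c).card + 1 := by
                  refine le_trans (Finset.card_union_le _ _) ?_
                  simp
          omega
        have hDC : compSet G {v : V | v ∉ B c} D ⊆ compSet G {v : V | v ∉ B x} C :=
          hC'C ▸ hDsub
        refine ih c ?_ ⟨D, hD, ?_⟩
        · rw [hcchild.2]; omega
        · intro v hv z hz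
          have hvC := hDC hv
          have hvnotc : v ∉ B c := compSet_subset hv
          refine sb_child hT hcchild hvnotc (fun z' hz' => ?_) z hz
          obtain ⟨hbtw, hnex⟩ := hsb v hvC z' hz'
          obtain ⟨c'', hc'', hside⟩ := exists_child_side hT r hnex hbtw
          have : c'' = c := by rw [hone] at hc''; exact hc''
          exact this ▸ hside
    · -- introduce node: B x = insert v0 (B c)
      obtain ⟨v0, hv0, hBx⟩ := hv0ex
      have hcchild : c ∈ children T r x := by rw [hone]; rfl
      have hsub : {v : V | v ∉ B x} ⊆ {v : V | v ∉ B c} := by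
        intro v hv hvc
        exact hv (by rw [hBx]; exact Finset.mem_insert_of_mem hvc)
      -- SB transfer for vertices of C
      have hsbc : ∀ v ∈ compSet G {v : V | v ∉ B x} C,
          ∀ z : ι, v ∈ B z → Btw T r c z ∧ z ≠ c := by
        intro v hv z hz
        have hvnotc : v ∉ B c := hsub (compSet_subset hv)
        refine sb_child hT hcchild hvnotc (fun z' hz' => ?_) z hz
        obtain ⟨hbtw, hnex⟩ := hsb v hv z' hz'
        obtain ⟨c'', hc'', hside⟩ := exists_child_side hT r hnex hbtw
        have : c'' = c := by rw [hone] at hc''; exact hc''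
        exact this ▸ hside
      by_cases hcent : IsCentroid G B W c
      · exact ⟨c, hcent⟩
      · simp only [IsCentroid, not_forall, not_le] at hcent
        obtain ⟨D, hD⟩ := hcent
        have h3 : (W \ B c).card ≤ (W \ B x).card + 1 := by
          have hsub2 : W \ B c ⊆ (W \ B x) ∪ {v0} := by
            intro v hv
            rw [Finset.mem_sdiff] at hv
            rw [Finset.mem_union, Finset.mem_sdiff, Finset.mem_singleton]
            by_cases hvv0 : v = v0
            · exact Or.inr hvv0
            · refine Or.inl ⟨hv.1, fun hvx => ?_⟩
              rw [hBx, Finset.mem_insert] at hvx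
              rcases hvx with h | h
              · exact hvv0 h
              · exact hv.2 h
          calc (W \ B c).card ≤ ((W \ B x) ∪ {v0}).card := Finset.card_le_card hsub2
            _ ≤ (W \ B x).card + 1 := by
                refine le_trans (Finset.card_union_le _ _) ?_
                simp
        -- the two heavy components meet
        obtain ⟨w0, hw0D, hw0C⟩ : ∃ w0, w0 ∈ compSet G {v : V | v ∉ B c} D ∧
            w0 ∈ compSet G {v : V | v ∉ B x} C := by
          by_contra hnomeet
          push_neg at hnomeet
          have hdisj : Disjoint (compSet G {v : V | v ∉ B c} D)
              (compSet G {v : V | v ∉ B x} C) := by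
            rw [Set.disjoint_left]
            exact fun v hv hv' => hnomeet v hv hv'
          have h1 := count_two (B := B) W (compSet_subset (C := D))
            (fun v hv => hsub (compSet_subset hv)) hdisj
          omega
        obtain ⟨hw0sc, hw0mkD⟩ := hw0D
        obtain ⟨hw0sx, hw0mkC⟩ := hw0C
        -- v0 is not in D
        have hv0D : v0 ∉ compSet G {v : V | v ∉ B c} D := by
          rintro ⟨hv0sc, hv0mk⟩
          have hreach : (G.induce {v : V | v ∉ B c}).Reachable ⟨v0, hv0sc⟩ ⟨w0, hw0sc⟩ :=
            SimpleGraph.ConnectedComponent.exact (hv0mk.trans hw0mkD.symm)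
          obtain ⟨p⟩ := hreach
          have hsidefn := side_of_walk_bags hT hedge hpath
            (fun v hv => hv) p x (nd w0) (by rw [hBx]; exact Finset.mem_insert_self _ _)
            (hnd w0)
          have hbtwc : Btw T r c (nd w0) :=
            (hsbc w0 ⟨hw0sx, hw0mkC⟩ (nd w0) (hnd w0)).1
          exact side_symm hT hsidefn (btw_up hT hcchild hbtwc)
        -- D's vertex set is contained in C's
        have hDC : compSet G {v : V | v ∉ B c} D ⊆ compSet G {v : V | v ∉ B x} C := by
          rintro v ⟨hvsc, hvmk⟩
          have hreach : (G.induce {v : V | v ∉ B c}).Reachable ⟨v, hvsc⟩ ⟨w0, hw0sc⟩ :=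
            SimpleGraph.ConnectedComponent.exact (hvmk.trans hw0mkD.symm)
          obtain ⟨p⟩ := hreach
          have hsup : ∀ w ∈ p.support, (w : V) ∈ {v : V | v ∉ B x} := by
            intro w hw
            have hwD : (w : V) ∈ compSet G {v : V | v ∉ B c} D :=
              ⟨w.2, (support_in_comp p hw).trans hw0mkD⟩
            intro hwBx
            rw [hBx, Finset.mem_insert] at hwBx
            rcases hwBx with h | h
            · exact hv0D (h ▸ hwD)
            · exact w.2 h
          have hvsx : v ∈ {v : V | v ∉ B x} := hsup _ p.start_mem_support
          have := mk_eq_of_walk_support p hsup hvsx hw0sx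
          exact ⟨hvsx, this.trans hw0mkC⟩
        refine ih c ?_ ⟨D, hD, ?_⟩
        · rw [hcchild.2]; omega
        · intro v hv z hz
          exact hsbc v (hDC hv) z hz
    · -- join node
      obtain ⟨⟨u0, hu0sx⟩, hu0mk⟩ := C.exists_rep
      have hu0C : u0 ∈ compSet G {v : V | v ∉ B x} C := ⟨hu0sx, hu0mk⟩
      obtain ⟨hbtw0, hnex0⟩ := hsb u0 hu0C (nd u0) (hnd u0)
      obtain ⟨c', hc', hside0⟩ := exists_child_side hT r hnex0 hbtw0
      have hBc' : B x = B c' := by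
        rw [htwo] at hc'
        rcases hc' with h | h
        · exact h ▸ hB1
        · exact h ▸ hB2
      have hc'child : c' ∈ children T r x := by
        rw [htwo] at hc' ⊢
        exact hc'
      have hseteq : {v : V | v ∉ B x} = {v : V | v ∉ B c'} := by
        rw [hBc']
      obtain ⟨D, hDset⟩ := comp_transfer (G := G) hseteq C
      -- side of every bag of every vertex of C
      have hsideall : ∀ v ∈ compSet G {v : V | v ∉ B x} C, ∀ z : ι, v ∈ B z →
          Side T x z c' := by
        rintro v ⟨hvsx, hvmk⟩ z hz
        have hreach : (G.induce {v : V | v ∉ B x}).Reachable ⟨v, hvsx⟩ ⟨u0, hu0sx⟩ :=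
          SimpleGraph.ConnectedComponent.exact (hvmk.trans hu0mk.symm)
        obtain ⟨p⟩ := hreach
        have hsidefn := side_of_walk_bags hT hedge hpath
          (fun v hv => hv) p z (nd u0) hz (hnd u0)
        exact side_trans hT hsidefn hside0
      refine ih c' ?_ ⟨D, ?_, ?_⟩
      · rw [hc'child.2]; omega
      · rw [hDset, ← hBc']
        exact hheavy
      · rw [hDset]
        intro v hv z hz
        have hvnotc : v ∉ B c' := by
          rw [← hBc']
          exact compSet_subset hv
        exact sb_child hT hc'child hvnotc (hsideall v hv) z hz

end StrongCentroidAux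


/-- For every nice tree decomposition of a finite simple graph `G` and every `W ⊆ V`,
there is a node `x` that is a strong centroid with respect to `W`: no connected component
of `G − B x` contains more than `(1/2) * |W \ B x|` vertices of `W`. -/
theorem exists_strong_centroid {V ι : Type} [Fintype V] [DecidableEq V]
    (G : SimpleGraph V) (T : SimpleGraph ι) (B : ι → Finset V) (r : ι)
    (hnice : IsNiceTreeDecomp G T B r) (W : Finset V) :
    ∃ x : ι, ∀ C : (G.induce {v : V | v ∉ B x}).ConnectedComponent,
      2 * ((W : Set V) ∩ compSet G {v : V | v ∉ B x} C).ncard ≤ (W \ B x).card := by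
  classical
  obtain ⟨⟨hT, hvert, hedge, hpath⟩, hdeg, hkind⟩ := hnice
  choose nd hnd using hvert
  by_cases hcent : StrongCentroidAux.IsCentroid G B W r
  · exact ⟨r, hcent⟩
  · simp only [StrongCentroidAux.IsCentroid, not_forall, not_le] at hcent
    obtain ⟨C, hheavy⟩ := hcent
    have hinv : StrongCentroidAux.GoodComp G T B r W r := by
      refine ⟨C, hheavy, ?_⟩
      intro v hv z hz
      have hvr : v ∉ B r := StrongCentroidAux.compSet_subset hv
      refine ⟨?_, fun e => hvr (e ▸ hz)⟩
      show T.dist r r + T.dist r z = T.dist r z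
      rw [SimpleGraph.dist_self, Nat.zero_add]
    obtain ⟨y, hy⟩ := StrongCentroidAux.descend hT hedge hpath hkind W nd hnd
      (W.sup (fun w => T.dist r (nd w)) + 1) r
      (by rw [SimpleGraph.dist_self]; omega) hinv
    exact ⟨y, hy⟩
end

section
/- Let G = (V,E) be a finite simple graph of treewidth at most k−1 and let W ⊆ V. Then there exists a balanced W-separator of G of size at most k, i.e., a set S ⊆ V with |S| ≤ k such that every connected component of G − S contains at most (1/2)·|W| vertices of W. -/
namespace SimpleGraph

variable {ι : Type} {T : SimpleGraph ι}

theorem IsAcyclic.eq_of_adj_of_walk_of_notMem_support (hT : T.IsAcyclic) {x y z : ι}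
    (hy : T.Adj x y) (hz : T.Adj x z) (p : T.Walk y z) (hx : x ∉ p.support) : y = z := by
  classical
  have hpath : (Walk.cons hy p.bypass).IsPath :=
    p.bypass_isPath.cons fun h => hx (p.support_bypass_subset_support h)
  simpa using (hT.eq_snd_of_adj_start hpath hz (Walk.end_mem_support _)).symm

theorem Connected.exists_adj_dist_add_one_eq (hT : T.Connected) {x b : ι} (hxb : x ≠ b) :
    ∃ (y : ι) (r : T.Walk y b), T.Adj x y ∧ x ∉ r.support ∧ T.dist y b + 1 = T.dist x b := by
  obtain ⟨p, hp, hlen⟩ := hT.exists_path_of_dist x b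
  cases p with
  | nil => exact absurd rfl hxb
  | cons hxy r =>
    refine ⟨_, r, hxy, ((Walk.cons_isPath_iff _ _).1 hp).2, le_antisymm ?_ ?_⟩
    · have := dist_le r
      rw [Walk.length_cons] at hlen
      omega
    · calc T.dist x b ≤ T.dist x _ + T.dist _ b := hT.dist_triangle
        _ = T.dist _ b + 1 := by rw [dist_eq_one_iff_adj.2 hxy, add_comm]

/-- In a tree, the nodes reachable from `a` while avoiding `x` all lie behind the same
neighbour `y` of `x`. -/
theorem IsTree.exists_adj_forall_dist_add_one_eq (hT : T.IsTree) {x a : ι} (hxa : x ≠ a) :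
    ∃ y, T.Adj x y ∧ ∀ b (p : T.Walk a b), x ∉ p.support → T.dist y b + 1 = T.dist x b := by
  obtain ⟨y, q, hxy, hxq, -⟩ := hT.connected.exists_adj_dist_add_one_eq hxa
  refine ⟨y, hxy, fun b p hxp => ?_⟩
  have hxb : x ≠ b := fun h => hxp (h ▸ p.end_mem_support)
  obtain ⟨z, r, hxz, hxr, hd⟩ := hT.connected.exists_adj_dist_add_one_eq hxb
  have hyz : y = z := hT.isAcyclic.eq_of_adj_of_walk_of_notMem_support hxy hxz
    (q.append (p.append r.reverse)) (by simp [Walk.mem_support_append_iff, hxq, hxp, hxr])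
  rwa [hyz]

end SimpleGraph

theorem Finset.sum_lt_sum_of_card_lt_two_mul {α : Type*} [DecidableEq α] {s t : Finset α}
    {f g : α → ℕ}
    (hts : t ⊆ s) (hs : ∀ i ∈ s, g i ≤ f i + 1) (ht : ∀ i ∈ t, g i + 1 ≤ f i)
    (hcard : s.card < 2 * t.card) : ∑ i ∈ s, g i < ∑ i ∈ s, f i := by
  have hout : ∑ i ∈ s \ t, g i ≤ ∑ i ∈ s \ t, f i + (s \ t).card := by
    simpa [Finset.sum_add_distrib] using
      Finset.sum_le_sum fun i hi => hs i (Finset.mem_sdiff.1 hi).1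
  have hin : ∑ i ∈ t, g i + t.card ≤ ∑ i ∈ t, f i := by
    simpa [Finset.sum_add_distrib] using Finset.sum_le_sum ht
  have hsdiff := Finset.card_sdiff_of_subset hts
  have htle := Finset.card_le_card hts
  rw [← Finset.sum_sdiff hts (f := g), ← Finset.sum_sdiff hts (f := f)]
  omega

namespace IsTreeDecomp

variable {V ι : Type} [DecidableEq V] {G : SimpleGraph V} {T : SimpleGraph ι} {B : ι → Finset V}

theorem exists_walk_of_mem_of_notMem (hTD : IsTreeDecomp G T B) {v : V} {a b x : ι}
    (ha : v ∈ B a) (hb : v ∈ B b) (hx : v ∉ B x) : ∃ p : T.Walk a b, x ∉ p.support := by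
  obtain ⟨p, hp⟩ := (hTD.1.existsUnique_path a b).exists
  exact ⟨p, fun hxp => hx (hTD.2.2.2 a b x p hp hxp (Finset.mem_inter.2 ⟨ha, hb⟩))⟩

theorem exists_walk_of_reachable (hTD : IsTreeDecomp G T B) {x : ι}
    {u w : {v : V | v ∉ B x}} (huw : (G.induce {v : V | v ∉ B x}).Reachable u w) {a b : ι}
    (ha : u.1 ∈ B a) (hb : w.1 ∈ B b) : ∃ p : T.Walk a b, x ∉ p.support := by
  obtain ⟨q⟩ := huw
  induction q generalizing a with
  | @nil u => exact hTD.exists_walk_of_mem_of_notMem ha hb u.2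
  | @cons u c w hadj q ih =>
    obtain ⟨n, hun, hcn⟩ := hTD.2.2.1 u.1 c.1 hadj
    obtain ⟨p₁, hp₁⟩ := hTD.exists_walk_of_mem_of_notMem ha hun u.2
    obtain ⟨p₂, hp₂⟩ := ih hcn hb
    exact ⟨p₁.append p₂, by simp [SimpleGraph.Walk.mem_support_append_iff, hp₁, hp₂]⟩

theorem exists_sum_dist_lt (hTD : IsTreeDecomp G T B) {nd : V → ι} (hnd : ∀ v, v ∈ B (nd v))
    {W : Finset V} {x : ι} (C : (G.induce {v : V | v ∉ B x}).ConnectedComponent)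
    (hC : W.card < 2 * ((W : Set V) ∩ compSet G {v : V | v ∉ B x} C).ncard) :
    ∃ y, ∑ w ∈ W, T.dist y (nd w) < ∑ w ∈ W, T.dist x (nd w) := by
  classical
  set A := W.filter (· ∈ compSet G {v : V | v ∉ B x} C)
  have hA : W.card < 2 * A.card := by
    convert hC using 2
    rw [← Set.ncard_coe_finset, Finset.coe_filter]
    rfl
  obtain ⟨w₀, hw₀⟩ : A.Nonempty := Finset.card_pos.1 (by omega)
  obtain ⟨hw₀B, hw₀C⟩ := (Finset.mem_filter.1 hw₀).2
  obtain ⟨y, hxy, hy⟩ :=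
    hTD.1.exists_adj_forall_dist_add_one_eq (x := x) (a := nd w₀) fun h => hw₀B (h ▸ hnd w₀)
  refine ⟨y, Finset.sum_lt_sum_of_card_lt_two_mul (Finset.filter_subset _ _)
    (fun w _ => ?_) (fun w hw => ?_) hA⟩
  · calc T.dist y (nd w) ≤ T.dist y x + T.dist x (nd w) := hTD.1.connected.dist_triangle
      _ = T.dist x (nd w) + 1 := by rw [SimpleGraph.dist_eq_one_iff_adj.2 hxy.symm, add_comm]
  · obtain ⟨_, hwC⟩ := (Finset.mem_filter.1 hw).2
    obtain ⟨p, hp⟩ := hTD.exists_walk_of_reachable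
      (SimpleGraph.ConnectedComponent.exact (hw₀C.trans hwC.symm)) (hnd w₀) (hnd w)
    exact (hy _ p hp).le

end IsTreeDecomp

theorem exists_balanced_W_separator_general {V : Type} [DecidableEq V]
    (G : SimpleGraph V) (k : ℕ)
    (htw : ∃ (ι : Type) (T : SimpleGraph ι) (B : ι → Finset V),
      IsTreeDecomp G T B ∧ ∀ x : ι, (B x).card ≤ k)
    (W : Finset V) :
    ∃ S : Finset V, S.card ≤ k ∧
      ∀ C : (G.induce {v : V | v ∉ S}).ConnectedComponent,
        2 * ((W : Set V) ∩ compSet G {v : V | v ∉ S} C).ncard ≤ W.card := by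
  by_contra! hcon
  obtain ⟨ι, T, B, hTD, hk⟩ := htw
  choose nd hnd using hTD.2.1
  choose C hC using fun x => hcon (B x) (hk x)
  have : Nonempty ι := hTD.1.connected.nonempty
  let Φ : ι → ℕ := fun x => ∑ w ∈ W, T.dist x (nd w)
  obtain ⟨y, hy⟩ := hTD.exists_sum_dist_lt hnd (C (Function.argmin Φ)) (hC _)
  exact (Function.argmin_le Φ y).not_gt hy

/-- If `G` has treewidth at most `k - 1` (i.e. it has a tree decomposition all of whose bags
have at most `k` vertices) and `W ⊆ V`, then `G` has a balanced `W`-separator of size at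
most `k`: a set `S` with `|S| ≤ k` such that every connected component of `G − S` contains
at most `(1/2) * |W|` vertices of `W`. -/
theorem exists_balanced_W_separator {V : Type} [Fintype V] [DecidableEq V]
    (G : SimpleGraph V) (k : ℕ)
    (htw : ∃ (ι : Type) (T : SimpleGraph ι) (B : ι → Finset V),
      IsTreeDecomp G T B ∧ ∀ x : ι, (B x).card ≤ k)
    (W : Finset V) :
    ∃ S : Finset V, S.card ≤ k ∧
      ∀ C : (G.induce {v : V | v ∉ S}).ConnectedComponent,
        2 * ((W : Set V) ∩ compSet G {v : V | v ∉ S} C).ncard ≤ W.card :=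
  exists_balanced_W_separator_general G k htw W
end

section
/- Assume 0 < ε ≤ 1/2, 0 < c' ≤ c are real numbers, and k ≥ 2 is an integer. Let f be a real-valued function on the natural numbers such that: (i) f(n + k) ≤ c'·(n + k) for every natural number n with n ≤ 4k; and (ii) for every natural number n with n > 4k there exist natural numbers n₁, n₂ with n₁ + n₂ = n and (1/2)·n ≤ n₁ ≤ (1 − ε)·n such that f(n + k) ≤ f(n₁ + k) + f(n₂ + k) + c·(n + k). Then for every natural number n with n ≥ 2k, f(n + k) ≤ (c/ε)·n·ln(n) − c·k. -/
set_option maxHeartbeats 1000000 in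
/-- Recurrence lemma for the running time of the divide-and-conquer algorithm:
if `f(n + k) ≤ c' (n + k)` for `n ≤ 4k` and for `n > 4k` there is a split
`n = n₁ + n₂` with `n/2 ≤ n₁ ≤ (1 - ε) n` and
`f(n + k) ≤ f(n₁ + k) + f(n₂ + k) + c (n + k)`, then
`f(n + k) ≤ (c/ε) n ln n − c k` for all `n ≥ 2k`. -/
theorem recurrence_lemma (ε c' c : ℝ) (hε0 : 0 < ε) (hε : ε ≤ 1 / 2)
    (hc'0 : 0 < c') (hc'c : c' ≤ c) (k : ℕ) (hk : 2 ≤ k) (f : ℕ → ℝ)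
    (hbase : ∀ n : ℕ, n ≤ 4 * k → f (n + k) ≤ c' * (n + k))
    (hrec : ∀ n : ℕ, 4 * k < n → ∃ n₁ n₂ : ℕ, n₁ + n₂ = n ∧
      (n : ℝ) / 2 ≤ (n₁ : ℝ) ∧ (n₁ : ℝ) ≤ (1 - ε) * n ∧
      f (n + k) ≤ f (n₁ + k) + f (n₂ + k) + c * (n + k)) :
    ∀ n : ℕ, 2 * k ≤ n → f (n + k) ≤ c / ε * n * Real.log n - c * k := by
  have hc : 0 < c := lt_of_lt_of_le hc'0 hc'c
  have hC : 0 < c / ε := div_pos hc hε0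
  have hkR : (2 : ℝ) ≤ (k : ℝ) := by exact_mod_cast hk
  intro n
  induction n using Nat.strong_induction_on with
  | _ n ih =>
    intro hn
    have hnR : 2 * (k : ℝ) ≤ (n : ℝ) := by exact_mod_cast hn
    have hn4 : (4 : ℝ) ≤ (n : ℝ) := by linarith
    have hn0 : (0 : ℝ) < (n : ℝ) := by linarith
    have hL1 : 1 ≤ Real.log n := by
      rw [Real.le_log_iff_exp_le hn0]
      have := Real.exp_one_lt_d9
      linarith
    by_cases hb : n ≤ 4 * k
    · -- base case
      have h1 := hbase n hb
      have h2 : c' * ((n : ℝ) + k) ≤ c * ((n : ℝ) + k) := by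
        apply mul_le_mul_of_nonneg_right hc'c; positivity
      have h2c : 2 * c ≤ c / ε := by
        rw [le_div_iff₀ hε0]; nlinarith
      have hnL : (n : ℝ) ≤ (n : ℝ) * Real.log n := by nlinarith
      have hfin : c * ((n : ℝ) + k) ≤ c / ε * n * Real.log n - c * k := by
        nlinarith [mul_le_mul_of_nonneg_left hnL hC.le,
          mul_le_mul_of_nonneg_right h2c hn0.le]
      calc f (n + k) ≤ c' * ((n : ℝ) + k) := by push_cast at h1 ⊢; linarith
        _ ≤ c * ((n : ℝ) + k) := h2
        _ ≤ _ := hfin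
    · push_neg at hb
      obtain ⟨n₁, n₂, hsum, h1, h2, hf⟩ := hrec n hb
      have h4R : 4 * (k : ℝ) < (n : ℝ) := by exact_mod_cast hb
      have hsumR : (n₁ : ℝ) + (n₂ : ℝ) = (n : ℝ) := by exact_mod_cast hsum
      have hn₂ε : ε * n ≤ (n₂ : ℝ) := by nlinarith
      have hn₂pos : (0 : ℝ) < (n₂ : ℝ) := by nlinarith
      have hn₁pos : (0 : ℝ) < (n₁ : ℝ) := by linarith
      have hn₂1 : 1 ≤ n₂ := by
        by_contra h
        have : n₂ = 0 := by omega
        rw [this] at hn₂pos; norm_num at hn₂pos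
      have hn₁lt : n₁ < n := by omega
      have h2kn₁ : 2 * k ≤ n₁ := by
        have h' : ((2 * k : ℕ) : ℝ) ≤ (n₁ : ℝ) := by push_cast; linarith
        exact_mod_cast h' 
      have ih₁ := ih n₁ hn₁lt h2kn₁
      -- log n₁ ≤ log n - ε
      have hεlt1 : ε < 1 := by linarith
      have hL₁ : Real.log n₁ ≤ Real.log n - ε := by
        have hmono : Real.log n₁ ≤ Real.log ((1 - ε) * n) := by
          apply Real.log_le_log hn₁pos h2
        have heq : Real.log ((1 - ε) * n) = Real.log (1 - ε) + Real.log n :=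
          Real.log_mul (by linarith) (by positivity)
        have hle : Real.log (1 - ε) ≤ -ε := by
          have := Real.log_le_sub_one_of_pos (show (0:ℝ) < 1 - ε by linarith)
          linarith
        linarith
      have s1 : (n₁ : ℝ) * Real.log n₁ ≤ (n₁ : ℝ) * Real.log n - ε * n₁ := by
        have h' := mul_le_mul_of_nonneg_left hL₁ hn₁pos.le
        have he : (n₁ : ℝ) * (Real.log n - ε) = (n₁ : ℝ) * Real.log n - ε * n₁ := by ring
        linarith
      have s0 : (n₁ : ℝ) * Real.log n + (n₂ : ℝ) * Real.log n = (n : ℝ) * Real.log n := by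
        rw [← hsumR]; ring
      have s3 : ε * ((n : ℝ) / 2) ≤ ε * (n₁ : ℝ) := mul_le_mul_of_nonneg_left h1 hε0.le
      by_cases hsmall : n₂ < 2 * k
      · -- n₂ small: use base case for n₂
        have hbn₂ := hbase n₂ (by omega)
        have hn₂lt : (n₂ : ℝ) < 2 * k := by exact_mod_cast hsmall
        have hn9 : (9 : ℝ) ≤ (n : ℝ) := by
          have : 9 ≤ n := by omega
          exact_mod_cast this
        have hexp2 : Real.exp 2 < 9 := by
          have h : Real.exp 2 = Real.exp 1 * Real.exp 1 := by
            rw [← Real.exp_add]; norm_num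
          have he : Real.exp 1 < 2.72 := lt_trans Real.exp_one_lt_d9 (by norm_num)
          nlinarith [Real.exp_pos 1]
        have hL2 : 2 ≤ Real.log n := by
          rw [Real.le_log_iff_exp_le hn0]; linarith
        have s2 : ε * (n : ℝ) * 2 ≤ (n₂ : ℝ) * Real.log n := by
          have := mul_le_mul hn₂ε hL2 (by norm_num : (0:ℝ) ≤ 2) hn₂pos.le
          linarith
        have s4 : ε * (4 * (k : ℝ)) < ε * (n : ℝ) := mul_lt_mul_of_pos_left h4R hε0
        have s5 : ε * (n₂ : ℝ) ≤ ε * (2 * (k : ℝ)) :=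
          mul_le_mul_of_nonneg_left hn₂lt.le hε0.le
        have key : (n₁ : ℝ) * Real.log n₁ + ε * ((n₂ : ℝ) + n + 2 * k)
            ≤ (n : ℝ) * Real.log n := by nlinarith [s0, s1, s2, s3, s4, s5]
        have hmul := mul_le_mul_of_nonneg_left key hC.le
        have hcn : c / ε * (ε * ((n₂ : ℝ) + n + 2 * k)) = c * ((n₂ : ℝ) + n + 2 * k) := by
          field_simp
        have h2' : c' * ((n₂ : ℝ) + k) ≤ c * ((n₂ : ℝ) + k) := by
          apply mul_le_mul_of_nonneg_right hc'c; positivity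
        push_cast at hbn₂ hf ih₁ ⊢
        linarith [hmul, hcn]
      · push_neg at hsmall
        have ih₂ := ih n₂ (by omega) hsmall
        have hn₂half : (n₂ : ℝ) ≤ (n : ℝ) / 2 := by linarith
        have hL₂ : Real.log n₂ ≤ Real.log n - Real.log 2 := by
          have hmono : Real.log n₂ ≤ Real.log ((n : ℝ) / 2) := by
            apply Real.log_le_log hn₂pos hn₂half
          rw [Real.log_div (by positivity) (by norm_num)] at hmono
          linarith
        have hlog2 := Real.log_two_gt_d9
        have t1 : (n₂ : ℝ) * Real.log n₂ ≤ (n₂ : ℝ) * Real.log n - (n₂ : ℝ) * Real.log 2 := by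
          have h' := mul_le_mul_of_nonneg_left hL₂ hn₂pos.le
          have he : (n₂ : ℝ) * (Real.log n - Real.log 2) =
              (n₂ : ℝ) * Real.log n - (n₂ : ℝ) * Real.log 2 := by ring
          linarith
        have t2 : ε * (n : ℝ) * 0.6931471803 ≤ (n₂ : ℝ) * Real.log 2 := by
          have := mul_le_mul hn₂ε hlog2.le (by norm_num : (0:ℝ) ≤ 0.6931471803) hn₂pos.le
          linarith
        have key : (n₁ : ℝ) * Real.log n₁ + (n₂ : ℝ) * Real.log n₂ + ε * n
            ≤ (n : ℝ) * Real.log n := by nlinarith [s0, s1, s3, t1, t2]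
        have hmul := mul_le_mul_of_nonneg_left key hC.le
        have hcn : c / ε * (ε * (n : ℝ)) = c * (n : ℝ) := by field_simp
        push_cast at hf ih₁ ih₂ ⊢
        linarith [hmul, hcn]
end

section
/- Assume 0 < ε ≤ 1/2, 0 < c' ≤ c are real numbers, and k ≥ 2 is an integer. Let f be a real-valued function on the natural numbers such that: (i) f(n + k) ≤ c'·(n + k) for every natural number n with n ≤ 4k; and (ii) for every natural number n with n > 4k there exist natural numbers n₁, n₂ with n₁ + n₂ = n and (1/2)·n ≤ n₁ ≤ (1 − ε)·n such that f(n + k) ≤ f(n₁ + k) + f(n₂ + k) + c·(n + k). Then for every natural number n with n ≥ 2k, f(n + k) ≤ (c/ε)·(n + k)·ln(n + k). -/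
set_option maxHeartbeats 1000000 in
/-- Corollary of the recurrence lemma: under the same hypotheses,
`f(n + k) ≤ (c/ε) (n + k) ln (n + k)` for all `n ≥ 2k`. -/
theorem recurrence_corollary (ε c' c : ℝ) (hε0 : 0 < ε) (hε : ε ≤ 1 / 2)
    (hc'0 : 0 < c') (hc'c : c' ≤ c) (k : ℕ) (hk : 2 ≤ k) (f : ℕ → ℝ)
    (hbase : ∀ n : ℕ, n ≤ 4 * k → f (n + k) ≤ c' * (n + k))
    (hrec : ∀ n : ℕ, 4 * k < n → ∃ n₁ n₂ : ℕ, n₁ + n₂ = n ∧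
      (n : ℝ) / 2 ≤ (n₁ : ℝ) ∧ (n₁ : ℝ) ≤ (1 - ε) * n ∧
      f (n + k) ≤ f (n₁ + k) + f (n₂ + k) + c * (n + k)) :
    ∀ n : ℕ, 2 * k ≤ n → f (n + k) ≤ c / ε * (n + k) * Real.log (n + k) := by
  have hc0 : (0:ℝ) < c := lt_of_lt_of_le hc'0 hc'c
  set d : ℝ := c / ε with hd
  have hd0 : 0 < d := div_pos hc0 hε0
  have hdc : d * ε = c := div_mul_cancel₀ c (ne_of_gt hε0)
  have hkR : (2:ℝ) ≤ (k:ℝ) := by exact_mod_cast hk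
  have hlog2 : (0.6931:ℝ) ≤ Real.log 2 := le_of_lt (by
    have := Real.log_two_gt_d9; linarith)
  -- Main stronger lemma
  have main : ∀ n : ℕ, 2 * k ≤ n → f (n + k) ≤ d * n * Real.log n - c * k := by
    intro n
    induction n using Nat.strong_induction_on with
    | _ n ih =>
      intro hn
      have hnR : (2:ℝ) * k ≤ (n:ℝ) := by exact_mod_cast hn
      have hn4 : (4:ℝ) ≤ (n:ℝ) := by linarith
      have hlogn1 : (1:ℝ) ≤ Real.log n := by
        have h4 : Real.log 4 ≤ Real.log n := Real.log_le_log (by norm_num) hn4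
        have : Real.log 4 = 2 * Real.log 2 := by
          rw [show (4:ℝ) = 2^2 by norm_num, Real.log_pow]; push_cast; ring
        linarith
      by_cases hcase : n ≤ 4 * k
      · -- base case
        have hb := hbase n hcase
        have hb' : f (n + k) ≤ c * (n + k) := le_trans hb (by
          have : (0:ℝ) ≤ (n:ℝ) + k := by positivity
          nlinarith)
        -- c*(n+k) ≤ d*n*log n - c*k  ⇔  ε*(n+2k) ≤ n*log n
        have key : c * ((n:ℝ) + k) ≤ d * n * Real.log n - c * k := by
          rw [← hdc]
          have h1 : ε * ((n:ℝ) + 2*k) ≤ (n:ℝ) := by nlinarith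
          have h2 : (n:ℝ) ≤ n * Real.log n := by nlinarith
          nlinarith
        linarith
      · -- recursive case
        push_neg at hcase
        obtain ⟨n₁, n₂, hsum, h1, h2, hf⟩ := hrec n hcase
        have hcR : (4:ℝ) * k < (n:ℝ) := by exact_mod_cast hcase
        have hsumR : (n₁:ℝ) + n₂ = n := by exact_mod_cast hsum
        have h2' : (n₁:ℝ) ≤ (n:ℝ) - ε * n := by nlinarith [h2]
        have hn2lb : ε * n ≤ (n₂:ℝ) := by linarith
        have hn2pos : 0 < n₂ := by
          have : (0:ℝ) < (n₂:ℝ) := by nlinarith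
          exact_mod_cast this
        have hn1gt : 2 * k < n₁ := by
          have : (2:ℝ) * k < (n₁:ℝ) := by nlinarith
          exact_mod_cast this
        have hn1pos : 0 < n₁ := by omega
        have hn1lt : n₁ < n := by omega
        have hn2lt : n₂ < n := by omega
        have hlogn2' : (2:ℝ) ≤ Real.log n := by
          have h8 : Real.log 8 ≤ Real.log n := Real.log_le_log (by norm_num) (by linarith)
          have : Real.log 8 = 3 * Real.log 2 := by
            rw [show (8:ℝ) = 2^3 by norm_num, Real.log_pow]; push_cast; ring
          linarith
        -- log n₁ ≤ log n - ε
        have hlog1 : Real.log n₁ ≤ Real.log n - ε := by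
          have hpos1 : (0:ℝ) < (n₁:ℝ) := by exact_mod_cast hn1pos
          have h1e : (0:ℝ) < 1 - ε := by linarith
          have := Real.log_le_log hpos1 h2
          rw [Real.log_mul (ne_of_gt h1e) (by positivity)] at this
          have hle : Real.log (1 - ε) ≤ (1 - ε) - 1 := Real.log_le_sub_one_of_pos h1e
          linarith
        -- bound f(n₁+k) by IH
        have hIH1 : f (n₁ + k) ≤ d * n₁ * Real.log n₁ - c * k := ih n₁ hn1lt (by omega)
        have hB1 : d * (n₁:ℝ) * Real.log n₁ ≤ d * n₁ * (Real.log n - ε) := by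
          have : (0:ℝ) ≤ d * n₁ := by positivity
          nlinarith
        by_cases hc2 : 2 * k ≤ n₂
        · -- both by IH
          have hIH2 : f (n₂ + k) ≤ d * n₂ * Real.log n₂ - c * k := ih n₂ hn2lt hc2
          have hlog2' : Real.log n₂ ≤ Real.log n - ε := by
            have hpos2 : (0:ℝ) < (n₂:ℝ) := by exact_mod_cast hn2pos
            have hle : (n₂:ℝ) ≤ (n:ℝ) / 2 := by nlinarith
            have := Real.log_le_log hpos2 hle
            rw [Real.log_div (by positivity) (by norm_num)] at this
            linarith
          have hB2 : d * (n₂:ℝ) * Real.log n₂ ≤ d * n₂ * (Real.log n - ε) := by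
            have : (0:ℝ) ≤ d * n₂ := by positivity
            nlinarith
          have hexp : d * (n₁:ℝ) * (Real.log n - ε) - c * k
              + (d * (n₂:ℝ) * (Real.log n - ε) - c * k) + c * ((n:ℝ) + k)
              = d * n * Real.log n - c * k := by
            rw [← hdc, ← hsumR]; ring
          linarith
        · -- n₂ small: use base bound
          push_neg at hc2
          have hb2 : f (n₂ + k) ≤ c * ((n₂:ℝ) + k) := by
            have := hbase n₂ (by omega)
            have hx : (0:ℝ) ≤ (n₂:ℝ) + k := by positivity
            nlinarith
          have e1 : (n₂:ℝ) ≤ (n₁:ℝ) := by linarith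
          have hdcn : d * (ε * (n:ℝ)) = c * n := by rw [← hdc]; ring
          have hA : 2 * c * (n:ℝ) ≤ d * n₂ * Real.log n := by
            have t1 : d * (n₂:ℝ) * 2 ≤ d * n₂ * Real.log n :=
              mul_le_mul_of_nonneg_left hlogn2' (by positivity)
            have t2 : d * (ε * (n:ℝ)) ≤ d * n₂ := mul_le_mul_of_nonneg_left hn2lb hd0.le
            linarith
          have hcn : c * (n₂:ℝ) ≤ c * (n₁:ℝ) := by nlinarith
          have hck4 : c * (4 * (k:ℝ)) ≤ c * n := by nlinarith
          have hexp : d * (n₁:ℝ) * (Real.log n - ε) + d * (n₂:ℝ) * Real.log n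
              = d * n * Real.log n - c * n₁ := by
            rw [← hdc, ← hsumR]; ring
          nlinarith [hf, hIH1, hB1, hb2, hA, hcn, hck4, hexp]
  -- conclude
  intro n hn
  have h := main n hn
  have hnR : (2:ℝ) * k ≤ (n:ℝ) := by exact_mod_cast hn
  have hlog0 : 0 ≤ Real.log n := Real.log_nonneg (by linarith)
  have hmono : Real.log n ≤ Real.log ((n:ℝ) + k) := Real.log_le_log (by linarith) (by
    nlinarith [hkR])
  have : d * n * Real.log n ≤ d * ((n:ℝ) + k) * Real.log ((n:ℝ) + k) := by
    have h1 : d * n * Real.log n ≤ d * ((n:ℝ)+k) * Real.log n := by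
      have hx : d * (n:ℝ) ≤ d * ((n:ℝ)+k) := by nlinarith
      exact mul_le_mul_of_nonneg_right hx hlog0
    have h2 : d * ((n:ℝ)+k) * Real.log n ≤ d * ((n:ℝ)+k) * Real.log ((n:ℝ)+k) :=
      mul_le_mul_of_nonneg_left hmono (by positivity)
    linarith
  have hck : 0 ≤ c * k := by positivity
  push_cast at h this ⊢
  linarith
end

section
/- Let c' > 0 be a real number and let T be a real-valued function of two natural-number arguments such that T(n, 0) ≥ c'·n for every natural number n, and T(n, k) ≥ 24·k·T(n − 1, k − 1) for all natural numbers n ≥ 1 and k ≥ 1. Then for all natural numbers n and k with k ≤ n, T(n, k) ≥ c'·24^k·k!·(n − k). -/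
/-- Lower bound on the solution of Reed's recurrence: if `T(n, 0) ≥ c' n` for all `n` and
`T(n, k) ≥ 24 k · T(n − 1, k − 1)` for all `n ≥ 1`, `k ≥ 1`, then
`T(n, k) ≥ c' · 24^k · k! · (n − k)` for all `k ≤ n`. -/
theorem reed_recurrence_lower_bound (c' : ℝ) (hc' : 0 < c') (T : ℕ → ℕ → ℝ)
    (hbase : ∀ n : ℕ, c' * n ≤ T n 0)
    (hrec : ∀ n k : ℕ, 1 ≤ n → 1 ≤ k → 24 * k * T (n - 1) (k - 1) ≤ T n k) :
    ∀ n k : ℕ, k ≤ n → c' * 24 ^ k * (Nat.factorial k : ℝ) * ((n - k : ℕ) : ℝ) ≤ T n k := by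
  intro n k
  induction k generalizing n with
  | zero =>
    intro _
    simpa using hbase n
  | succ k ih =>
    intro hkn
    have hn1 : 1 ≤ n := le_trans (Nat.succ_le_succ (Nat.zero_le k)) hkn
    have hk' : k ≤ n - 1 := by omega
    have h1 := ih (n - 1) hk'
    have h2 := hrec n (k + 1) hn1 (Nat.succ_le_succ (Nat.zero_le k))
    simp only [Nat.add_sub_cancel] at h2
    have hsub : n - 1 - k = n - (k + 1) := by omega
    rw [hsub] at h1
    have hpos : (0 : ℝ) ≤ 24 * ((k : ℝ) + 1) := by positivity
    have h3 := mul_le_mul_of_nonneg_left h1 hpos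
    have heq : c' * 24 ^ (k + 1) * (Nat.factorial (k + 1) : ℝ) * ((n - (k + 1) : ℕ) : ℝ)
        = 24 * ((k : ℝ) + 1) * (c' * 24 ^ k * (Nat.factorial k : ℝ) * ((n - (k + 1) : ℕ) : ℝ)) := by
      rw [Nat.factorial_succ]; push_cast; ring
    rw [heq]
    refine le_trans h3 ?_
    push_cast at h2
    exact h2
end

section
/- Let A ≥ 0 and B ≥ 0 be real numbers and let T be a real-valued function of two natural-number arguments such that: (i) T(i, 0) ≤ B for every natural number i; (ii) T(0, j) ≤ B·(j + 1) for every natural number j; and (iii) T(i, j) ≤ T(i, j − 1) + 2·T(i − 1, j) + A for all natural numbers i ≥ 1 and j ≥ 1. Then for all natural numbers t and k, T(t, k) ≤ 2^t·( B·(k + 1)·binom(t + k + 2, k + 1) + A·binom(t + k, k) ). -/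
/-- Upper bound on the recursion of the improved separation procedure: if `T(i, 0) ≤ B`,
`T(0, j) ≤ B (j + 1)`, and `T(i, j) ≤ T(i, j − 1) + 2 T(i − 1, j) + A` for `i, j ≥ 1`, then
`T(t, k) ≤ 2^t (B (k + 1) · C(t + k + 2, k + 1) + A · C(t + k, k))`. -/
theorem improved_recurrence_upper_bound (A B : ℝ) (hA : 0 ≤ A) (hB : 0 ≤ B)
    (T : ℕ → ℕ → ℝ)
    (hbase1 : ∀ i : ℕ, T i 0 ≤ B)
    (hbase2 : ∀ j : ℕ, T 0 j ≤ B * (j + 1))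
    (hrec : ∀ i j : ℕ, 1 ≤ i → 1 ≤ j → T i j ≤ T i (j - 1) + 2 * T (i - 1) j + A) :
    ∀ t k : ℕ, T t k ≤ 2 ^ t *
      (B * (k + 1) * (Nat.choose (t + k + 2) (k + 1) : ℝ) + A * (Nat.choose (t + k) k : ℝ)) := by
  -- strengthened claim
  have key : ∀ t k : ℕ, T t k ≤
      2 ^ t * (B * (k + 1) * (Nat.choose (t + k + 2) (k + 1) : ℝ))
        + A * (2 ^ t * (Nat.choose (t + k) k : ℝ) - 1) := by
    intro t
    induction t with
    | zero =>
      intro k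
      have h := hbase2 k
      have h1 : Nat.choose (0 + k + 2) (k + 1) = k + 2 := by
        simpa using Nat.choose_symm_diff (n := k + 2) (k := k + 1) (by omega)
      have h2 : Nat.choose (0 + k) k = 1 := by simp
      rw [h1, h2]
      push_cast
      nlinarith [mul_nonneg hB (by positivity : (0:ℝ) ≤ (k:ℝ) + 1)]
    | succ t ih =>
      intro k
      induction k with
      | zero =>
        have h := hbase1 (t + 1)
        have h1 : Nat.choose (t + 1 + 0 + 2) (0 + 1) = t + 3 := by
          simp [Nat.choose_one_right]
        have h2 : Nat.choose (t + 1 + 0) 0 = 1 := Nat.choose_zero_right _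
        rw [h1, h2]
        have hp : (1:ℝ) ≤ 2 ^ (t + 1) := one_le_pow₀ (by norm_num)
        push_cast
        nlinarith [mul_nonneg hB (by positivity : (0:ℝ) ≤ (t:ℝ) + 3)]
      | succ k ihk =>
        have hr := hrec (t + 1) (k + 1) (by omega) (by omega)
        simp only [Nat.add_sub_cancel] at hr
        have IH1 := ihk
        have IH2 := ih (k + 1)
        -- Pascal identities
        have p1 : (Nat.choose (t + 1 + (k + 1) + 2) (k + 2) : ℝ)
            = (Nat.choose (t + k + 3) (k + 1) : ℝ) + (Nat.choose (t + k + 3) (k + 2) : ℝ) := by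
          have : t + 1 + (k + 1) + 2 = (t + k + 3) + 1 := by omega
          rw [this, Nat.choose_succ_succ (t + k + 3) (k + 1)]
          push_cast; ring
        have p2 : (Nat.choose (t + 1 + (k + 1)) (k + 1) : ℝ)
            = (Nat.choose (t + k + 1) k : ℝ) + (Nat.choose (t + k + 1) (k + 1) : ℝ) := by
          have : t + 1 + (k + 1) = (t + k + 1) + 1 := by omega
          rw [this, Nat.choose_succ_succ (t + k + 1) k]
          push_cast; ring
        have e1 : t + 1 + k + 2 = t + k + 3 := by omega
        have e2 : t + (k + 1) + 2 = t + k + 3 := by omega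
        have e3 : t + 1 + k = t + k + 1 := by omega
        have e4 : t + (k + 1) = t + k + 1 := by omega
        rw [e1, e3] at IH1
        rw [e2, e4] at IH2
        have hpow : (0:ℝ) < 2 ^ t := by positivity
        have hc1 : (0:ℝ) ≤ (Nat.choose (t + k + 3) (k + 1) : ℝ) := Nat.cast_nonneg _
        have e5 : k + 1 + 1 = k + 2 := rfl
        rw [e5] at IH2
        have hpp : (2:ℝ) ^ (t + 1) = 2 * 2 ^ t := by ring
        rw [p1, p2, hpp]
        rw [hpp] at IH1
        push_cast at IH1 IH2 ⊢
        nlinarith [hr, IH1, IH2, mul_nonneg (mul_nonneg hB hc1) hpow.le]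
  intro t k
  have h := key t k
  have hc : (0:ℝ) ≤ 2 ^ t * (Nat.choose (t + k) k : ℝ) := by positivity
  nlinarith [mul_nonneg hA hc]
end
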